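/- For a commutative non-autonomous system (X, f_{1,∞}), Banks's condition implies weak mixing: if for any three non-empty open sets U, V, W there exists n with f_1^n(U) ∩ V ≠ ∅ and f_1^n(U) ∩ W ≠ ∅, then for any non-empty open sets U_1, U_2, V_1, V_2 there exists k with f_1^k(U_1) ∩ V_1 ≠ ∅ and f_1^k(U_2) ∩ V_2 ≠ ∅. -/

import Mathlib

open Set Filter MeasureTheory TopologicalSpace

/-- `iterN f n = f_{n-1} ∘ ⋯ ∘ f_0`, the `n`-th iterate of the non-autonomous system. -/
def iterN {X : Type*} (f : ℕ → X → X) : ℕ → X → X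
  | 0 => id
  | n + 1 => f n ∘ iterN f n

/-- Topological transitivity of a non-autonomous system. -/
def NATransitive {X : Type*} [TopologicalSpace X] (f : ℕ → X → X) : Prop :=
  ∀ U V : Set X, IsOpen U → IsOpen V → U.Nonempty → V.Nonempty →
    ∃ n : ℕ, 0 < n ∧ (iterN f n '' U ∩ V).Nonempty

/-- Weak mixing (order 2). -/
def NAWeaklyMixing {X : Type*} [TopologicalSpace X] (f : ℕ → X → X) : Prop :=
  ∀ U₁ U₂ V₁ V₂ : Set X, IsOpen U₁ → IsOpen U₂ → IsOpen V₁ → IsOpen V₂ →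
    U₁.Nonempty → U₂.Nonempty → V₁.Nonempty → V₂.Nonempty →
    ∃ n : ℕ, 0 < n ∧ (iterN f n '' U₁ ∩ V₁).Nonempty ∧ (iterN f n '' U₂ ∩ V₂).Nonempty

/-- Weak mixing of order `m`. -/
def NAWeaklyMixingOrder {X : Type*} [TopologicalSpace X] (f : ℕ → X → X) (m : ℕ) : Prop :=
  ∀ U V : Fin m → Set X, (∀ i, IsOpen (U i)) → (∀ i, IsOpen (V i)) →
    (∀ i, (U i).Nonempty) → (∀ i, (V i).Nonempty) →
    ∃ n : ℕ, 0 < n ∧ ∀ i, (iterN f n '' U i ∩ V i).Nonempty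

/-- Banks's condition. -/
def NABanks {X : Type*} [TopologicalSpace X] (f : ℕ → X → X) : Prop :=
  ∀ U V W : Set X, IsOpen U → IsOpen V → IsOpen W →
    U.Nonempty → V.Nonempty → W.Nonempty →
    ∃ n : ℕ, 0 < n ∧ (iterN f n '' U ∩ V).Nonempty ∧ (iterN f n '' U ∩ W).Nonempty

/-- Topological mixing. -/
def NAMixing {X : Type*} [TopologicalSpace X] (f : ℕ → X → X) : Prop :=
  ∀ U V : Set X, IsOpen U → IsOpen V → U.Nonempty → V.Nonempty →
    ∃ N : ℕ, ∀ n ≥ N, (iterN f n '' U ∩ V).Nonempty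

/-- `blockC f s k = f_{s+k-1} ∘ ⋯ ∘ f_s`. -/
def blockC {X : Type*} (f : ℕ → X → X) (s k : ℕ) : X → X :=
  iterN (fun i => f (s + i)) k

/-- The `k`-th iterate system `f_{1,∞}^{[k]}`. -/
def kthSys {X : Type*} (f : ℕ → X → X) (k : ℕ) : ℕ → X → X :=
  fun n => blockC f (n * k) k

/-- The induced non-autonomous system on Borel probability measures (pushforwards). -/
noncomputable def inducedM {X : Type*} [MeasurableSpace X] [TopologicalSpace X]
    [BorelSpace X] (f : ℕ → X → X) (hf : ∀ n, Continuous (f n)) :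
    ℕ → ProbabilityMeasure X → ProbabilityMeasure X :=
  fun n μ => μ.map ((hf n).measurable.aemeasurable)

/-- The induced non-autonomous system on the hyperspace of non-empty compact subsets. -/
def inducedK {X : Type*} [TopologicalSpace X] (f : ℕ → X → X) (hf : ∀ n, Continuous (f n)) :
    ℕ → NonemptyCompacts X → NonemptyCompacts X :=
  fun n K => ⟨⟨f n '' (K : Set X), K.isCompact.image (hf n)⟩, K.nonempty.image _⟩

/-- The set `N(U, δ)` of sensitivity times. -/
def NSet {X : Type*} [PseudoMetricSpace X] (f : ℕ → X → X) (U : Set X) (δ : ℝ) : Set ℕ :=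
  {n | 0 < n ∧ ∃ x ∈ U, ∃ y ∈ U, δ < dist (iterN f n x) (iterN f n y)}

/-- Sensitive dependence on initial conditions. -/
def NASensitive {X : Type*} [PseudoMetricSpace X] (f : ℕ → X → X) : Prop :=
  ∃ δ : ℝ, 0 < δ ∧ ∀ x : X, ∀ U : Set X, IsOpen U → x ∈ U →
    ∃ y ∈ U, ∃ n : ℕ, 0 < n ∧ δ < dist (iterN f n x) (iterN f n y)

/-- A thick subset of ℕ. -/
def ThickSet (S : Set ℕ) : Prop := ∀ p : ℕ, ∃ n : ℕ, ∀ j ≤ p, n + j ∈ S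

/-- A syndetic subset of ℕ. -/
def SyndeticSet (S : Set ℕ) : Prop := ∃ a : ℕ, ∀ i : ℕ, ∃ j, i ≤ j ∧ j ≤ i + a ∧ j ∈ S

/-- Upper density of a subset of ℕ. -/
noncomputable def upperDens (S : Set ℕ) : ℝ :=
  Filter.limsup (fun n : ℕ => (Nat.card ↥(S ∩ Set.Iio n) : ℝ) / n) Filter.atTop

/-- Periodic point of a non-autonomous system. -/
def NAPeriodicPt {X : Type*} (f : ℕ → X → X) (x : X) : Prop :=
  ∃ n : ℕ, 0 < n ∧ ∀ k : ℕ, 0 < k → iterN f (n * k) x = x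

/-!
Apply Banks's condition to `(U₂, U₁, V₁)` to get `n`: the open sets
`A = U₂ ∩ f₁ⁿ⁻¹(U₁)` and `B = U₂ ∩ f₁ⁿ⁻¹(V₁)` are non-empty. Banks's condition for
`(A, B, V₂)` gives `k` with `f₁ᵏ(A) ∩ B ≠ ∅` and `f₁ᵏ(U₂) ∩ V₂ ≠ ∅`. If `x ∈ A` and
`f₁ᵏ x ∈ B`, then `f₁ⁿ x ∈ U₁` and, since `f₁ᵏ` and `f₁ⁿ` commute,
`f₁ᵏ (f₁ⁿ x) = f₁ⁿ (f₁ᵏ x) ∈ V₁`.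
-/

theorem continuous_iterN {X : Type*} [TopologicalSpace X] {f : ℕ → X → X}
    (hf : ∀ n, Continuous (f n)) (n : ℕ) : Continuous (iterN f n) := by
  induction n with
  | zero => exact continuous_id
  | succ n ih => exact (hf n).comp ih

theorem commute_iterN_right {X : Type*} {f : ℕ → X → X} {g : X → X}
    (hg : ∀ i, Function.Commute g (f i)) (n : ℕ) : Function.Commute g (iterN f n) := by
  induction n with
  | zero => exact Function.Commute.id_right
  | succ n ih => exact (hg n).comp_right ih

theorem commute_iterN_iterN {X : Type*} {f : ℕ → X → X}
    (hc : ∀ i j, Function.Commute (f i) (f j)) (m n : ℕ) :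
    Function.Commute (iterN f m) (iterN f n) := by
  induction m with
  | zero => exact Function.Commute.id_left
  | succ m ih => exact (commute_iterN_right (hc m) n).comp_left ih

theorem Function.Commute.image_inter_nonempty_of_image_preimage_inter_preimage {X : Type*}
    {g h : X → X} (hgh : Function.Commute g h) {U V : Set X}
    (hUV : (g '' (h ⁻¹' U) ∩ h ⁻¹' V).Nonempty) : (g '' U ∩ V).Nonempty := by
  obtain ⟨_, ⟨x, hxU, rfl⟩, hgxV⟩ := hUV
  exact ⟨g (h x), mem_image_of_mem g hxU, (hgh x).symm ▸ hgxV⟩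

theorem commutative_banks_implies_weaklyMixing_general {X : Type*} [MetricSpace X]
    (f : ℕ → X → X) (hf : ∀ n, Continuous (f n))
    (hc : ∀ i j, f i ∘ f j = f j ∘ f i) (h : NABanks f) : NAWeaklyMixing f := by
  intro U₁ U₂ V₁ V₂ hU₁ hU₂ hV₁ hV₂ hU₁ne hU₂ne hV₁ne hV₂ne
  obtain ⟨n, -, hA, hB⟩ := h U₂ U₁ V₁ hU₂ hU₁ hV₁ hU₂ne hU₁ne hV₁ne
  rw [image_inter_nonempty_iff] at hA hB
  have hcont := continuous_iterN hf n
  obtain ⟨k, hk, hAB, hAV₂⟩ := h _ _ V₂ (hU₂.inter (hU₁.preimage hcont))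
    (hU₂.inter (hV₁.preimage hcont)) hV₂ hA hB hV₂ne
  have hcomm : Function.Commute (iterN f k) (iterN f n) :=
    commute_iterN_iterN (fun i j x => congrFun (hc i j) x) k n
  refine ⟨k, hk, hcomm.image_inter_nonempty_of_image_preimage_inter_preimage ?_, ?_⟩
  · exact hAB.mono (inter_subset_inter (image_mono inter_subset_right) inter_subset_right)
  · exact hAV₂.mono (inter_subset_inter_left _ (image_mono inter_subset_left))

/-- for a commutative non-autonomous system, Banks's condition implies
weak mixing. -/
theorem commutative_banks_implies_weaklyMixing {X : Type*} [MetricSpace X] [CompactSpace X]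
    (f : ℕ → X → X) (hf : ∀ n, Continuous (f n))
    (hc : ∀ i j, f i ∘ f j = f j ∘ f i) (h : NABanks f) : NAWeaklyMixing f :=
  commutative_banks_implies_weaklyMixing_general f hf hc h
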